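/- arXiv:0810.5352 — 3 statements merged into one kernel-verified Lean document; each statement's English description precedes it below -/
import Mathlib

section
/- Let K be a compact Hausdorff space and let f : C(K) → ℂ be an entire function given by its everywhere-convergent Taylor series at zero, f(x) = ∑_{k=0}^∞ P_k(x), where each P_k is a continuous k-homogeneous polynomial on C(K). Then f is orthogonally additive if and only if every P_k is orthogonally additive. -/
open MeasureTheory Filter Topology

/-! Scaling `x ⊥ y` to `t • x ⊥ t • y` and using homogeneity of the `P k`, orthogonal additivity
of `f` says that the entire function `t ↦ ∑ₖ (Pₖ(x + y) - Pₖ x - Pₖ y) tᵏ` vanishes identically,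
so by uniqueness of power series coefficients each `Pₖ` is additive on `x, y`. The converse is
termwise passage to the limit. -/

/-- Two elements of `C(K, ℂ)` are orthogonal when their pointwise product vanishes;
`f` is orthogonally additive when it is additive on orthogonal pairs. -/
def IsOrthAdd {K : Type*} [TopologicalSpace K] [CompactSpace K]
    (f : C(K, ℂ) → ℂ) : Prop :=
  ∀ x y : C(K, ℂ), x * y = 0 → f (x + y) = f x + f y

/-- `P` is a continuous `k`-homogeneous polynomial on `C(K, ℂ)`:
`P x = M (x, …, x)` for some continuous `k`-linear map `M`. -/
def IsHomogPoly {K : Type*} [TopologicalSpace K] [CompactSpace K]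
    (k : ℕ) (P : C(K, ℂ) → ℂ) : Prop :=
  ∃ M : ContinuousMultilinearMap ℂ (fun _ : Fin k => C(K, ℂ)) ℂ,
    ∀ x : C(K, ℂ), P x = M (fun _ => x)

open Finset

theorem tendsto_zero_of_tendsto_sum_range {G : Type*} [AddCommGroup G] [TopologicalSpace G]
    [IsTopologicalAddGroup G] {a : ℕ → G} {s : G}
    (h : Tendsto (fun n => ∑ j ∈ range n, a j) atTop (𝓝 s)) : Tendsto a atTop (𝓝 0) := by
  simpa [sum_range_succ] using (h.comp (tendsto_add_atTop_nat 1)).sub h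

theorem eq_zero_of_forall_tendsto_sum_range_mul_pow {𝕜 : Type*} [NontriviallyNormedField 𝕜]
    [CompleteSpace 𝕜] {a : ℕ → 𝕜}
    (h : ∀ t : 𝕜, Tendsto (fun n => ∑ j ∈ range n, a j * t ^ j) atTop (𝓝 0)) : a = 0 := by
  set p := FormalMultilinearSeries.ofScalars 𝕜 a
  obtain ⟨C, hC⟩ : BddAbove (Set.range fun n => ‖a n‖) :=
    (tendsto_zero_of_tendsto_sum_range (by simpa using h 1)).norm.bddAbove_range
  have hradius : 0 < p.radius := by
    refine one_pos.trans_le ?_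
    simpa using p.le_radius_of_bound C (r := 1) fun n => by
      simpa [p, FormalMultilinearSeries.ofScalars_norm] using hC (Set.mem_range_self n)
  have hsum : p.sum =ᶠ[𝓝 0] 0 := by
    filter_upwards [Metric.eball_mem_nhds 0 hradius] with t ht
    refine tendsto_nhds_unique (p.hasSum ht).tendsto_sum_nat ?_
    simpa [p, FormalMultilinearSeries.ofScalars_apply_eq, mul_comm] using h t
  have hp : p = 0 := (p.hasFPowerSeriesOnBall hradius).hasFPowerSeriesAt.eq_zero_of_eventually hsum
  exact (FormalMultilinearSeries.ofScalars_series_eq_zero 𝕜).mp hp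

section OrthAdd

variable {K : Type*} [TopologicalSpace K] [CompactSpace K]

theorem IsHomogPoly.map_smul {k : ℕ} {P : C(K, ℂ) → ℂ} (hP : IsHomogPoly k P) (t : ℂ)
    (x : C(K, ℂ)) : P (t • x) = t ^ k * P x := by
  obtain ⟨M, hM⟩ := hP
  simpa [hM] using M.map_smul_univ (fun _ => t) (fun _ => x)

theorem tendsto_sum_range_orthAdd_defect {f : C(K, ℂ) → ℂ} {P : ℕ → C(K, ℂ) → ℂ}
    (hP : ∀ k, IsHomogPoly k (P k))
    (hf : ∀ x, Tendsto (fun n => ∑ k ∈ range n, P k x) atTop (𝓝 (f x))) (x y : C(K, ℂ))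
    (t : ℂ) :
    Tendsto (fun n => ∑ k ∈ range n, (P k (x + y) - P k x - P k y) * t ^ k) atTop
      (𝓝 (f (t • (x + y)) - f (t • x) - f (t • y))) := by
  refine (((hf _).sub (hf _)).sub (hf _)).congr fun n => ?_
  simp only [← sum_sub_distrib, (hP _).map_smul]
  exact sum_congr rfl fun k _ => by ring

end OrthAdd

theorem orthAdd_iff_forall_taylor_orthAdd_general
    {K : Type*} [TopologicalSpace K] [CompactSpace K]
    (f : C(K, ℂ) → ℂ) (P : ℕ → C(K, ℂ) → ℂ)
    (hP : ∀ k, IsHomogPoly k (P k))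
    (hf : ∀ x : C(K, ℂ),
      Tendsto (fun n => ∑ k ∈ Finset.range n, P k x) atTop (𝓝 (f x))) :
    IsOrthAdd f ↔ ∀ k, IsOrthAdd (P k) := by
  constructor
  · intro hf_orth k x y hxy
    have hdefect : ∀ t : ℂ, Tendsto (fun n => ∑ j ∈ range n, (P j (x + y) - P j x - P j y) * t ^ j)
        atTop (𝓝 0) := fun t => by
      simpa [smul_add, hf_orth (t • x) (t • y) (by rw [smul_mul_smul, hxy, smul_zero])]
        using tendsto_sum_range_orthAdd_defect hP hf x y t
    have hcoeff := congr_fun (eq_zero_of_forall_tendsto_sum_range_mul_pow hdefect) k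
    simp only [Pi.zero_apply] at hcoeff
    linear_combination hcoeff
  · intro hP_orth x y hxy
    refine tendsto_nhds_unique (hf (x + y)) (((hf x).add (hf y)).congr fun n => ?_)
    simp only [← sum_add_distrib, hP_orth _ x y hxy]

/-- An entire function given by an everywhere-convergent Taylor series at `0`
is orthogonally additive iff every homogeneous term is orthogonally additive. -/
theorem orthAdd_iff_forall_taylor_orthAdd
    {K : Type*} [TopologicalSpace K] [CompactSpace K] [T2Space K]
    (f : C(K, ℂ) → ℂ) (P : ℕ → C(K, ℂ) → ℂ)
    (hP : ∀ k, IsHomogPoly k (P k))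
    (hf : ∀ x : C(K, ℂ),
      Tendsto (fun n => ∑ k ∈ Finset.range n, P k x) atTop (𝓝 (f x))) :
    IsOrthAdd f ↔ ∀ k, IsOrthAdd (P k) :=
  orthAdd_iff_forall_taylor_orthAdd_general f P hP hf
end

section
/- Let K be a compact Hausdorff space, k ≥ 1 an integer, μ a complex regular Borel measure on K, and let P : C(K) → ℂ be given by P(x) = ∫_K x(t)^k dμ(t). Then the total variation of μ satisfies |μ|(K) ≤ sup_{‖x‖_∞ ≤ 1} |P(x)|; consequently |μ|(K) = ‖P‖, where ‖P‖ = sup_{‖x‖_∞ ≤ 1} |P(x)|. -/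
open MeasureTheory Filter Topology

/-!
Let `v` be a measurable unimodular `k`-th root of `conj w`, so that `v ^ k * w = 1`.
Approximating `v` in `L¹(μ)` by continuous functions and pulling these radially back into the
unit disk gives `x` in the unit ball of `C(K)` with `∫ |x - v| dμ` small. Since `z ↦ z ^ k` is `k`-Lipschitz on the unit disk, `P x` is then
close to `∫ v ^ k * w dμ = μ(K)`; the bound `|P x| ≤ μ(K)` on the unit ball is immediate.
-/

/-- The norm `‖P‖ = sup_{‖x‖ ≤ 1} |P x|` of a polynomial on `C(K, ℂ)`. -/
noncomputable def polyNorm {K : Type*} [TopologicalSpace K] [CompactSpace K]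
    (P : C(K, ℂ) → ℂ) : ℝ :=
  sSup ((fun x => ‖P x‖) '' Metric.closedBall (0 : C(K, ℂ)) 1)

theorem norm_pow_sub_pow_le_mul_norm_sub {R : Type*} [SeminormedRing R] [NormOneClass R]
    {a b : R} (ha : ‖a‖ ≤ 1) (hb : ‖b‖ ≤ 1) (n : ℕ) :
    ‖a ^ n - b ^ n‖ ≤ n * ‖a - b‖ := by
  induction n with
  | zero => simp
  | succ n ih =>
    have hbn : ‖b ^ n‖ ≤ 1 := (norm_pow_le _ _).trans (pow_le_one₀ (norm_nonneg _) hb)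
    calc ‖a ^ (n + 1) - b ^ (n + 1)‖ = ‖a * (a ^ n - b ^ n) + (a - b) * b ^ n‖ := by
          rw [pow_succ', pow_succ']; congr 1; noncomm_ring
      _ ≤ ‖a‖ * ‖a ^ n - b ^ n‖ + ‖a - b‖ * ‖b ^ n‖ :=
          (norm_add_le _ _).trans (add_le_add (norm_mul_le _ _) (norm_mul_le _ _))
      _ ≤ 1 * (n * ‖a - b‖) + ‖a - b‖ * 1 := by gcongr
      _ = (n + 1 : ℕ) * ‖a - b‖ := by push_cast; ring

section UnitBallRetraction

variable {E : Type*} [SeminormedAddCommGroup E] [NormedSpace ℝ E]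

noncomputable def unitBallRetraction (z : E) : E := (max 1 ‖z‖)⁻¹ • z

theorem continuous_unitBallRetraction : Continuous (unitBallRetraction : E → E) :=
  ((continuous_const.max continuous_norm).inv₀ fun _ => by positivity).smul continuous_id

theorem norm_unitBallRetraction_le_one (z : E) : ‖unitBallRetraction z‖ ≤ 1 := by
  rw [unitBallRetraction, norm_smul, norm_inv, Real.norm_of_nonneg (by positivity),
    inv_mul_le_iff₀ (by positivity), mul_one]
  exact le_max_right _ _

theorem norm_unitBallRetraction_sub_le {v : E} (hv : ‖v‖ ≤ 1) (z : E) :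
    ‖unitBallRetraction z - v‖ ≤ 2 * ‖z - v‖ := by
  have hdist : ‖unitBallRetraction z - z‖ ≤ ‖z - v‖ := by
    rcases le_total ‖z‖ 1 with hz | hz
    · simp [unitBallRetraction, max_eq_left hz]
    · calc ‖unitBallRetraction z - z‖ = ‖((‖z‖)⁻¹ - 1) • z‖ := by
            rw [unitBallRetraction, max_eq_right hz, sub_smul, one_smul]
        _ = ‖z‖ - 1 := by
            rw [norm_smul, Real.norm_of_nonpos (by simpa using inv_le_one_of_one_le₀ hz)]
            field_simp; ring
        _ ≤ ‖z‖ - ‖v‖ := by linarith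
        _ ≤ ‖z - v‖ := norm_sub_norm_le _ _
  calc ‖unitBallRetraction z - v‖ ≤ ‖unitBallRetraction z - z‖ + ‖z - v‖ :=
        norm_sub_le_norm_sub_add_norm_sub _ _ _
    _ ≤ 2 * ‖z - v‖ := by linarith

end UnitBallRetraction

theorem exists_measurable_forall_norm_eq_one_pow_mul_eq_one {α : Type*} [MeasurableSpace α]
    {w : α → ℂ} (hw : Measurable w) (hw1 : ∀ t, ‖w t‖ = 1) {k : ℕ} (hk : k ≠ 0) :
    ∃ v : α → ℂ, Measurable v ∧ (∀ t, ‖v t‖ = 1) ∧ ∀ t, v t ^ k * w t = 1 := by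
  refine ⟨fun t => starRingEnd ℂ (w t) ^ (k⁻¹ : ℂ),
    (Complex.continuous_conj.measurable.comp hw).pow_const _, fun t => ?_, fun t => ?_⟩
  · simp [Complex.norm_cpow_inv_nat, hw1]
  · rw [Complex.cpow_nat_inv_pow _ hk, Complex.conj_mul', hw1]; norm_num

theorem norm_integral_pow_mul_le_measureReal_univ {α : Type*} [MeasurableSpace α]
    {μ : Measure α} [IsFiniteMeasure μ] {x w : α → ℂ}
    (hx : ∀ t, ‖x t‖ ≤ 1) (hw : ∀ t, ‖w t‖ ≤ 1) (k : ℕ) :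
    ‖∫ t, x t ^ k * w t ∂μ‖ ≤ μ.real Set.univ := by
  simpa using norm_integral_le_of_norm_le_const (μ := μ) (C := 1) (.of_forall fun t => by
    simpa [norm_mul, norm_pow] using mul_le_one₀ (pow_le_one₀ (norm_nonneg _) (hx t))
      (norm_nonneg _) (hw t))

section Approximation

variable {α : Type*} [TopologicalSpace α] [NormalSpace α] [MeasurableSpace α] [BorelSpace α]
  {μ : Measure α}

theorem MeasureTheory.Integrable.exists_continuous_norm_le_one_integral_norm_sub_le
    {E : Type*} [NormedAddCommGroup E] [NormedSpace ℝ E] [μ.WeaklyRegular]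
    {f : α → E} (hf : Integrable f μ) (hf1 : ∀ t, ‖f t‖ ≤ 1) {ε : ℝ} (hε : 0 < ε) :
    ∃ g : α → E, Continuous g ∧ (∀ t, ‖g t‖ ≤ 1) ∧ ∫ t, ‖f t - g t‖ ∂μ ≤ ε := by
  obtain ⟨g, hfg, hg⟩ := hf.exists_boundedContinuous_integral_sub_le (half_pos hε)
  refine ⟨fun t => unitBallRetraction (g t), continuous_unitBallRetraction.comp g.continuous,
    fun t => norm_unitBallRetraction_le_one _, ?_⟩
  calc ∫ t, ‖f t - unitBallRetraction (g t)‖ ∂μ ≤ ∫ t, 2 * ‖f t - g t‖ ∂μ := by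
        refine integral_mono_of_nonneg (.of_forall fun _ => norm_nonneg _)
          (((hf.sub hg).norm).const_mul 2) (.of_forall fun t => ?_)
        simpa only [norm_sub_rev (f t)] using norm_unitBallRetraction_sub_le (hf1 t) (g t)
    _ = 2 * ∫ t, ‖f t - g t‖ ∂μ := integral_const_mul _ _
    _ ≤ ε := by linarith

theorem exists_continuous_norm_le_one_norm_integral_pow_mul_sub_lt [IsFiniteMeasure μ]
    [μ.WeaklyRegular] {k : ℕ} (hk : k ≠ 0) {w : α → ℂ} (hw : Measurable w)
    (hw1 : ∀ t, ‖w t‖ = 1) {ε : ℝ} (hε : 0 < ε) :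
    ∃ x : α → ℂ, Continuous x ∧ (∀ t, ‖x t‖ ≤ 1) ∧
      ‖∫ t, x t ^ k * w t ∂μ - μ.real Set.univ‖ < ε := by
  obtain ⟨v, hvm, hv1, hvk⟩ := exists_measurable_forall_norm_eq_one_pow_mul_eq_one hw hw1 hk
  have hkpos : (0 : ℝ) < k := by positivity
  have hv : Integrable v μ :=
    .of_bound hvm.aestronglyMeasurable 1 (.of_forall fun t => (hv1 t).le)
  obtain ⟨x, hxc, hx1, hxv⟩ :=
    hv.exists_continuous_norm_le_one_integral_norm_sub_le (fun t => (hv1 t).le)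
      (div_pos hε (mul_pos two_pos hkpos))
  refine ⟨x, hxc, hx1, ?_⟩
  have hx : Integrable x μ := .of_bound hxc.measurable.aestronglyMeasurable 1 (.of_forall hx1)
  have hxw : Integrable (fun t => x t ^ k * w t) μ :=
    .of_bound ((hxc.measurable.pow_const k).mul hw).aestronglyMeasurable 1
      (.of_forall fun t => by simpa [hw1] using pow_le_one₀ (norm_nonneg _) (hx1 t))
  have hvw : ∫ t, v t ^ k * w t ∂μ = μ.real Set.univ := by simp [hvk]
  calc ‖∫ t, x t ^ k * w t ∂μ - μ.real Set.univ‖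
      = ‖∫ t, (x t ^ k * w t - v t ^ k * w t) ∂μ‖ := by
        rw [integral_sub hxw (by simp [hvk]), hvw]
    _ ≤ ∫ t, ‖x t ^ k * w t - v t ^ k * w t‖ ∂μ := norm_integral_le_integral_norm _
    _ ≤ ∫ t, k * ‖v t - x t‖ ∂μ := by
        refine integral_mono_of_nonneg (.of_forall fun _ => norm_nonneg _)
          ((hv.sub hx).norm.const_mul _) (.of_forall fun t => ?_)
        simp only [← sub_mul, norm_mul, hw1, mul_one, norm_sub_rev (v t)]
        exact norm_pow_sub_pow_le_mul_norm_sub (hx1 t) (hv1 t).le k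
    _ = k * ∫ t, ‖v t - x t‖ ∂μ := integral_const_mul _ _
    _ ≤ k * (ε / (2 * k)) := by gcongr
    _ < ε := by field_simp; linarith

end Approximation

/-- The complex measure is encoded in polar form `w · μ`, with `μ` finite, positive and regular
and `w` unimodular, so that its total variation is `μ`. -/
theorem totalVariation_le_polyNorm
    {K : Type*} [TopologicalSpace K] [CompactSpace K] [T2Space K]
    [MeasurableSpace K] [BorelSpace K]
    (k : ℕ) (hk : 1 ≤ k)
    (μ : Measure K) [IsFiniteMeasure μ] (hreg : μ.Regular)
    (w : K → ℂ) (hw : Measurable w) (hw1 : ∀ t, ‖w t‖ = 1)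
    (P : C(K, ℂ) → ℂ)
    (hPdef : ∀ x : C(K, ℂ), P x = ∫ t, (x t) ^ k * w t ∂μ) :
    (μ Set.univ).toReal ≤ polyNorm P ∧ (μ Set.univ).toReal = polyNorm P := by
  have : μ.WeaklyRegular := hreg.weaklyRegular
  have hP : polyNorm P = μ.real Set.univ := by
    refine csSup_eq_of_forall_le_of_forall_lt_exists_gt
      ⟨_, 0, Metric.mem_closedBall_self zero_le_one, rfl⟩ ?_ fun b hb => ?_
    · rintro _ ⟨x, hx, rfl⟩
      dsimp only
      rw [hPdef]
      exact norm_integral_pow_mul_le_measureReal_univ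
        (fun t => (x.norm_coe_le_norm t).trans (mem_closedBall_zero_iff.1 hx))
        (fun t => (hw1 t).le) k
    · obtain ⟨x, hxc, hx1, hxμ⟩ := exists_continuous_norm_le_one_norm_integral_pow_mul_sub_lt
        (μ := μ) (k := k) (by omega) hw hw1 (sub_pos.2 hb)
      refine ⟨_, ⟨⟨x, hxc⟩, mem_closedBall_zero_iff.2
        ((ContinuousMap.norm_le _ zero_le_one).2 hx1), rfl⟩, ?_⟩
      have hmass := norm_sub_norm_le ((μ.real Set.univ : ℝ) : ℂ) (∫ t, x t ^ k * w t ∂μ)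
      rw [norm_sub_rev, Complex.norm_real, Real.norm_of_nonneg measureReal_nonneg] at hmass
      change b < ‖P ⟨x, hxc⟩‖
      rw [hPdef, ContinuousMap.coe_mk]
      linarith
  exact ⟨hP.ge, hP.symm⟩
end

section
/- Let K be a compact Hausdorff space, μ a finite positive Borel measure on K, and g_k ∈ L¹(μ) for k ≥ 1 with ∑_{k≥1} ‖g_k‖_{L¹(μ)} r^k < ∞ for every r > 0. Define f : C(K) → ℂ by f(x) = ∫_K ∑_{k≥1} g_k(t) x(t)^k dμ(t). Then f is a holomorphic function of bounded type whose k-th Taylor polynomial at zero is the orthogonally additive continuous k-homogeneous polynomial P_k(x) = ∫_K x(t)^k g_k(t) dμ(t). -/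
open MeasureTheory Filter Topology

open MeasureTheory Filter Topology

/-!
Pairing with `g ∈ L¹(μ)` is a continuous linear functional `h ↦ ∫ h g dμ` on `C(K)` of norm at
most `‖g‖₁`. Composed with the `k`-fold pointwise product it becomes a continuous `k`-linear map
of norm at most `‖g‖₁` whose diagonal is `x ↦ ∫ xᵏ g dμ`. For `g = gₖ` these maps form a formal
power series whose radius is infinite by the growth hypothesis, and since
`∑ₖ ∫ |gₖ| |x|ᵏ dμ < ∞`, integrating the series term by term shows that it sums to `f`. So `f` is
entire with Taylor polynomials `Pₖ`, bounded on balls by `∑ₖ ‖gₖ‖₁ rᵏ`. Orthogonal additivity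
holds pointwise: `x y = 0` forces `(x + y)ᵏ = xᵏ + yᵏ` for `k ≥ 1`.
-/

theorem integral_norm_mul_le {α 𝕜 : Type*} [MeasurableSpace α] [NormedRing 𝕜] {μ : Measure α}
    {g : α → 𝕜} (hg : Integrable g μ) {h : α → 𝕜} {C : ℝ} (hh : ∀ t, ‖h t‖ ≤ C) :
    ∫ t, ‖h t * g t‖ ∂μ ≤ (∫ t, ‖g t‖ ∂μ) * C := by
  rw [← integral_mul_const]
  refine integral_mono_of_nonneg (Eventually.of_forall fun t => norm_nonneg _)
    (hg.norm.mul_const C) (Eventually.of_forall fun t => ?_)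
  exact (norm_mul_le _ _).trans_eq (mul_comm _ _) |>.trans
    (mul_le_mul_of_nonneg_left (hh t) (norm_nonneg _))

theorem integral_norm_pow_mul_le {K : Type*} [TopologicalSpace K] [CompactSpace K]
    [MeasurableSpace K] {μ : Measure K} {g : K → ℂ} (hg : Integrable g μ) (x : C(K, ℂ)) (k : ℕ) :
    ∫ t, ‖x t ^ k * g t‖ ∂μ ≤ (∫ t, ‖g t‖ ∂μ) * ‖x‖ ^ k :=
  integral_norm_mul_le hg fun t => by
    rw [norm_pow]
    exact pow_le_pow_left₀ (norm_nonneg _) (x.norm_coe_le_norm t) k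

section IntegralAgainst

variable {K : Type*} [TopologicalSpace K] [CompactSpace K] [MeasurableSpace K]
  [OpensMeasurableSpace K] {μ : Measure K} {g : K → ℂ}

theorem integrable_continuousMap_mul (hg : Integrable g μ) (h : C(K, ℂ)) :
    Integrable (fun t => h t * g t) μ :=
  hg.bdd_mul h.continuous.aestronglyMeasurable (Eventually.of_forall h.norm_coe_le_norm)

variable (μ) in
noncomputable def integralMulCLM (hg : Integrable g μ) : C(K, ℂ) →L[ℂ] ℂ :=
  LinearMap.mkContinuous
    { toFun := fun h => ∫ t, h t * g t ∂μ
      map_add' := fun a b => by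
        simp only [ContinuousMap.add_apply, add_mul]
        exact integral_add (integrable_continuousMap_mul hg a) (integrable_continuousMap_mul hg b)
      map_smul' := fun c a => by
        simp only [ContinuousMap.smul_apply, smul_eq_mul, mul_assoc, integral_const_mul,
          RingHom.id_apply] }
    (∫ t, ‖g t‖ ∂μ)
    (fun h => (norm_integral_le_integral_norm _).trans
      (integral_norm_mul_le hg h.norm_coe_le_norm))

theorem norm_integralMulCLM_le (hg : Integrable g μ) :
    ‖integralMulCLM μ hg‖ ≤ ∫ t, ‖g t‖ ∂μ :=
  LinearMap.mkContinuous_norm_le _ (integral_nonneg fun _ => norm_nonneg _) _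

variable (μ) in
noncomputable def integralMultilinear (hg : Integrable g μ) (ι : Type*) [Fintype ι] :
    ContinuousMultilinearMap ℂ (fun _ : ι => C(K, ℂ)) ℂ :=
  (integralMulCLM μ hg).compContinuousMultilinearMap
    (ContinuousMultilinearMap.mkPiAlgebra ℂ ι C(K, ℂ))

theorem integralMultilinear_apply_const (hg : Integrable g μ) (k : ℕ) (x : C(K, ℂ)) :
    integralMultilinear μ hg (Fin k) (fun _ => x) = ∫ t, x t ^ k * g t ∂μ := by
  simp [integralMultilinear, integralMulCLM]

theorem norm_integralMultilinear_le (hg : Integrable g μ) (ι : Type*) [Fintype ι] [Nonempty ι] :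
    ‖integralMultilinear μ hg ι‖ ≤ ∫ t, ‖g t‖ ∂μ :=
  calc ‖integralMultilinear μ hg ι‖
      ≤ ‖integralMulCLM μ hg‖ * ‖ContinuousMultilinearMap.mkPiAlgebra ℂ ι C(K, ℂ)‖ :=
        ContinuousLinearMap.norm_compContinuousMultilinearMap_le _ _
    _ ≤ (∫ t, ‖g t‖ ∂μ) * 1 :=
        mul_le_mul (norm_integralMulCLM_le hg) ContinuousMultilinearMap.norm_mkPiAlgebra_le
          (norm_nonneg _) (integral_nonneg fun _ => norm_nonneg _)
    _ = ∫ t, ‖g t‖ ∂μ := mul_one _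

end IntegralAgainst

theorem isOrthAdd_integral_pow_mul {K : Type*} [TopologicalSpace K] [CompactSpace K]
    [MeasurableSpace K] [OpensMeasurableSpace K] {μ : Measure K} {g : K → ℂ}
    (hg : Integrable g μ) {k : ℕ} (hk : k ≠ 0) :
    IsOrthAdd (fun x : C(K, ℂ) => ∫ t, x t ^ k * g t ∂μ) := by
  intro x y hxy
  have hpow : ∀ t, (x + y) t ^ k = x t ^ k + y t ^ k := fun t => by
    rcases mul_eq_zero.mp (congrFun (congrArg DFunLike.coe hxy) t) with h | h <;>
      simp [h, zero_pow hk]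
  simp only [hpow, add_mul]
  exact integral_add (integrable_continuousMap_mul hg (x ^ k))
    (integrable_continuousMap_mul hg (y ^ k))

theorem summable_of_le_mul_pow {a b : ℕ → ℝ} (ha₀ : ∀ k, 0 ≤ a k)
    (ha : ∀ r : ℝ, 0 < r → Summable fun k => a k * r ^ (k + 1)) {s : ℝ} (hs : 0 ≤ s)
    (hb₀ : ∀ k, 0 ≤ b k) (hb : ∀ k, b k ≤ a k * s ^ (k + 1)) : Summable b :=
  (ha (s + 1) (by positivity)).of_nonneg_of_le hb₀ fun k => (hb k).trans <|
    mul_le_mul_of_nonneg_left (pow_le_pow_left₀ hs (le_add_of_nonneg_right zero_le_one) _) (ha₀ k)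

section IntegralSeries

variable {K : Type*} [TopologicalSpace K] [CompactSpace K] [MeasurableSpace K]
  [OpensMeasurableSpace K] {μ : Measure K} {g : ℕ → K → ℂ}

variable (μ) in
/-- The `0`-th term is `0`, matching sums over `k ≥ 1`, so `g 0` need not be integrable. -/
noncomputable def integralSeries (hg : ∀ k, 1 ≤ k → Integrable (g k) μ) :
    FormalMultilinearSeries ℂ C(K, ℂ) ℂ :=
  fun k => if hk : 1 ≤ k then integralMultilinear μ (hg k hk) (Fin k) else 0

theorem integralSeries_zero (hg : ∀ k, 1 ≤ k → Integrable (g k) μ) : integralSeries μ hg 0 = 0 := rfl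

theorem integralSeries_apply_const (hg : ∀ k, 1 ≤ k → Integrable (g k) μ) {k : ℕ} (hk : 1 ≤ k) (x : C(K, ℂ)) :
    integralSeries μ hg k (fun _ => x) = ∫ t, x t ^ k * g k t ∂μ := by
  rw [integralSeries, dif_pos hk, integralMultilinear_apply_const]

theorem norm_integralSeries_succ_le (hg : ∀ k, 1 ≤ k → Integrable (g k) μ) (k : ℕ) :
    ‖integralSeries μ hg (k + 1)‖ ≤ ∫ t, ‖g (k + 1) t‖ ∂μ := by
  rw [integralSeries, dif_pos (Nat.le_add_left 1 k)]
  exact norm_integralMultilinear_le _ _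

theorem integralSeries_radius (hg : ∀ k, 1 ≤ k → Integrable (g k) μ)
    (hgrowth : ∀ r : ℝ, 0 < r → Summable fun k => (∫ t, ‖g (k + 1) t‖ ∂μ) * r ^ (k + 1)) :
    (integralSeries μ hg).radius = ⊤ := by
  refine FormalMultilinearSeries.radius_eq_top_of_summable_norm _ fun r => ?_
  refine (summable_nat_add_iff 1).mp <| summable_of_le_mul_pow
    (fun k => integral_nonneg fun _ => norm_nonneg _) hgrowth r.coe_nonneg
    (fun k => by positivity) fun k => ?_
  exact mul_le_mul_of_nonneg_right (norm_integralSeries_succ_le hg k) (by positivity)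

theorem hasSum_integral_pow_mul (hg : ∀ k, 1 ≤ k → Integrable (g k) μ)
    (hgrowth : ∀ r : ℝ, 0 < r → Summable fun k => (∫ t, ‖g (k + 1) t‖ ∂μ) * r ^ (k + 1))
    (x : C(K, ℂ)) :
    HasSum (fun k => ∫ t, x t ^ (k + 1) * g (k + 1) t ∂μ)
      (∫ t, ∑' k, g (k + 1) t * x t ^ (k + 1) ∂μ) := by
  have hint k : Integrable (fun t => x t ^ (k + 1) * g (k + 1) t) μ :=
    integrable_continuousMap_mul (hg _ (Nat.le_add_left 1 k)) (x ^ (k + 1))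
  have hsum := hasSum_integral_of_summable_integral_norm hint <|
    summable_of_le_mul_pow (fun k => integral_nonneg fun _ => norm_nonneg _) hgrowth
      (norm_nonneg x) (fun k => integral_nonneg fun _ => norm_nonneg _)
      fun k => integral_norm_pow_mul_le (hg _ (Nat.le_add_left 1 k)) x (k + 1)
  simpa only [mul_comm] using hsum

theorem hasFPowerSeriesOnBall_integral_tsum (hg : ∀ k, 1 ≤ k → Integrable (g k) μ)
    (hgrowth : ∀ r : ℝ, 0 < r → Summable fun k => (∫ t, ‖g (k + 1) t‖ ∂μ) * r ^ (k + 1)) :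
    HasFPowerSeriesOnBall (fun x : C(K, ℂ) => ∫ t, ∑' k, g (k + 1) t * x t ^ (k + 1) ∂μ)
      (integralSeries μ hg) 0 ⊤ where
  r_le := (integralSeries_radius hg hgrowth).ge
  r_pos := ENNReal.zero_lt_top
  hasSum {x} _ := by
    rw [zero_add, ← hasSum_nat_add_iff' 1]
    simpa [integralSeries_apply_const hg, integralSeries_zero] using
      hasSum_integral_pow_mul hg hgrowth x

theorem norm_integral_tsum_le (hg : ∀ k, 1 ≤ k → Integrable (g k) μ)
    (hgrowth : ∀ r : ℝ, 0 < r → Summable fun k => (∫ t, ‖g (k + 1) t‖ ∂μ) * r ^ (k + 1))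
    {r : ℝ} (hr : 0 < r) {x : C(K, ℂ)} (hx : ‖x‖ ≤ r) :
    ‖∫ t, ∑' k, g (k + 1) t * x t ^ (k + 1) ∂μ‖ ≤
      ∑' k, (∫ t, ‖g (k + 1) t‖ ∂μ) * r ^ (k + 1) := by
  refine (hasSum_integral_pow_mul hg hgrowth x).norm_le_of_bounded (hgrowth r hr).hasSum
    fun k => ?_
  calc ‖∫ t, x t ^ (k + 1) * g (k + 1) t ∂μ‖
      ≤ ∫ t, ‖x t ^ (k + 1) * g (k + 1) t‖ ∂μ := norm_integral_le_integral_norm _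
    _ ≤ (∫ t, ‖g (k + 1) t‖ ∂μ) * ‖x‖ ^ (k + 1) :=
        integral_norm_pow_mul_le (hg _ (Nat.le_add_left 1 k)) x (k + 1)
    _ ≤ (∫ t, ‖g (k + 1) t‖ ∂μ) * r ^ (k + 1) := by gcongr

end IntegralSeries

theorem powerSeriesIntegral_boundedType_taylor_general
    {K : Type*} [TopologicalSpace K] [CompactSpace K]
    [MeasurableSpace K] [BorelSpace K]
    (μ : Measure K) (g : ℕ → K → ℂ)
    (hgi : ∀ k, 1 ≤ k → Integrable (g k) μ)
    (hgrowth : ∀ r : ℝ, 0 < r →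
      Summable (fun k : ℕ => (∫ t, ‖g (k + 1) t‖ ∂μ) * r ^ (k + 1)))
    (f : C(K, ℂ) → ℂ)
    (hfdef : ∀ x : C(K, ℂ), f x = ∫ t, (∑' k : ℕ, g (k + 1) t * (x t) ^ (k + 1)) ∂μ)
    (P : ℕ → C(K, ℂ) → ℂ)
    (hPdef : ∀ k, ∀ x : C(K, ℂ), P k x = ∫ t, (x t) ^ k * g k t ∂μ) :
    Differentiable ℂ f ∧
    (∀ r : ℝ, 0 < r → ∃ C : ℝ, ∀ x : C(K, ℂ), ‖x‖ ≤ r → ‖f x‖ ≤ C) ∧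
    (∀ k, 1 ≤ k → IsHomogPoly k (P k)) ∧
    (∀ k, 1 ≤ k → IsOrthAdd (P k)) ∧
    (∀ x : C(K, ℂ), HasSum (fun k : ℕ => P (k + 1) x) (f x)) := by
  obtain rfl : f = _ := funext hfdef
  obtain rfl : P = _ := funext fun k => funext (hPdef k)
  have hf := hasFPowerSeriesOnBall_integral_tsum hgi hgrowth
  refine ⟨fun x => (hf.analyticAt_of_mem (by simp)).differentiableAt,
    fun r hr => ⟨_, fun x hx => norm_integral_tsum_le hgi hgrowth hr hx⟩,
    fun k hk => ⟨integralSeries μ hgi k, fun x => (integralSeries_apply_const hgi hk x).symm⟩,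
    fun k hk => isOrthAdd_integral_pow_mul (hgi k hk) (Nat.one_le_iff_ne_zero.mp hk),
    hasSum_integral_pow_mul hgi hgrowth⟩

/-- Let `μ` be a finite positive Borel measure on `K` and `gₖ ∈ L¹(μ)` (`k ≥ 1`)
with `∑_{k ≥ 1} ‖gₖ‖_{L¹(μ)} rᵏ < ∞` for every `r > 0`.  Then
`f x = ∫_K ∑_{k ≥ 1} gₖ(t) x(t)^k dμ(t)` defines a holomorphic function of
bounded type on `C(K)` whose `k`-th Taylor polynomial at zero is the
orthogonally additive continuous `k`-homogeneous polynomial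
`Pₖ x = ∫_K x(t)^k gₖ(t) dμ(t)` (i.e. `f = ∑_{k ≥ 1} Pₖ` with each `Pₖ`
continuous `k`-homogeneous and orthogonally additive). -/
theorem powerSeriesIntegral_boundedType_taylor
    {K : Type*} [TopologicalSpace K] [CompactSpace K] [T2Space K]
    [MeasurableSpace K] [BorelSpace K]
    (μ : Measure K) [IsFiniteMeasure μ] (g : ℕ → K → ℂ)
    (hgi : ∀ k, 1 ≤ k → Integrable (g k) μ)
    (hgrowth : ∀ r : ℝ, 0 < r →
      Summable (fun k : ℕ => (∫ t, ‖g (k + 1) t‖ ∂μ) * r ^ (k + 1)))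
    (f : C(K, ℂ) → ℂ)
    (hfdef : ∀ x : C(K, ℂ), f x = ∫ t, (∑' k : ℕ, g (k + 1) t * (x t) ^ (k + 1)) ∂μ)
    (P : ℕ → C(K, ℂ) → ℂ)
    (hPdef : ∀ k, ∀ x : C(K, ℂ), P k x = ∫ t, (x t) ^ k * g k t ∂μ) :
    Differentiable ℂ f ∧
    (∀ r : ℝ, 0 < r → ∃ C : ℝ, ∀ x : C(K, ℂ), ‖x‖ ≤ r → ‖f x‖ ≤ C) ∧
    (∀ k, 1 ≤ k → IsHomogPoly k (P k)) ∧
    (∀ k, 1 ≤ k → IsOrthAdd (P k)) ∧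
    (∀ x : C(K, ℂ), HasSum (fun k : ℕ => P (k + 1) x) (f x)) :=
  powerSeriesIntegral_boundedType_taylor_general μ g hgi hgrowth f hfdef P hPdef
end
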